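/- Let G be a triangle-free graph with vertex set V = {0,1,...,n−1} and edge set E. Let x be a point outside V and let M be a metric space on the ground set V ∪ {x} such that for all u,v,w ∈ V: (i) u < v < w implies [uvw], and (ii) {u,v} ∈ E if and only if {x,u,v} ∈ E_M. Then E ⊆ { {0,1}, {1,2}, ..., {n−2,n−1}, {n−1,0} }. -/

import Mathlib

universe u

/-- A function `d` is a metric (distance function) on `α`. -/
structure IsMetric {α : Type*} (d : α → α → ℝ) : Prop where
  eq_iff : ∀ x y, d x y = 0 ↔ x = y
  symm : ∀ x y, d x y = d y x
  triangle : ∀ x y z, d x z ≤ d x y + d y z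

/-- `[u v w]`: the points are pairwise distinct and `v` lies between `u` and `w`. -/
def MBtw {α : Type*} (d : α → α → ℝ) (u v w : α) : Prop :=
  u ≠ v ∧ u ≠ w ∧ v ≠ w ∧ d u v + d v w = d u w

/-- The hyperedge set `E_M` associated with a metric space: all triples
`{x,y,z}` such that one of the three points is between the other two. -/
def metricEdges {α : Type*} (d : α → α → ℝ) : Set (Set α) :=
  {s | ∃ u v w : α, s = {u, v, w} ∧ MBtw d u v w}

/-- A 3-uniform hypergraph (given by its hyperedge set on vertex type `V`)
is metric if there is a metric space on ground set `V` with `E = E_M`. -/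
def IsMetricHypergraph {V : Type*} (E : Set (Set V)) : Prop :=
  ∃ d : V → V → ℝ, IsMetric d ∧ E = metricEdges d

/-- The hypergraph based on a graph `G`: the vertex set is `V ∪ {x}` (here
`Option V`, with `none` playing the role of the extra point `x`); the
hyperedges are all three-point subsets of `V` together with all sets
`{x,u,v}` with `{u,v}` an edge of `G`. -/
def basedOn {V : Type*} (G : SimpleGraph V) : Set (Set (Option V)) :=
  {s | (∃ u v w : V, u ≠ v ∧ u ≠ w ∧ v ≠ w ∧ s = {some u, some v, some w}) ∨
       (∃ u v : V, G.Adj u v ∧ s = {none, some u, some v})}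

/-- The hyperedge set of the subhypergraph induced on `U`. -/
def inducedEdges {V : Type*} (E : Set (Set V)) (U : Set V) : Set (Set U) :=
  {s | Subtype.val '' s ∈ E}

/-- The line `L_M(xy)` determined by two points of a metric space. -/
def lineOf {α : Type*} (d : α → α → ℝ) (x y : α) : Set α :=
  {x, y} ∪ {z | ({x, y, z} : Set α) ∈ metricEdges d}

/-- `e` is a two-point set forming an edge of `G`. -/
def IsEdgePair {V : Type*} (G : SimpleGraph V) (e : Set V) : Prop :=
  ∃ u v : V, G.Adj u v ∧ e = {u, v}

/-- The equivalence relation `≡_G`: two pairs are equivalent iff both are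
edges of `G` or both are non-edges of `G`. -/
def graphEquiv {V : Type*} (G : SimpleGraph V) (e f : Set V) : Prop :=
  (IsEdgePair G e ∧ IsEdgePair G f) ∨ (¬ IsEdgePair G e ∧ ¬ IsEdgePair G f)

/-- A relation `r` on two-point subsets of `V` is an obstacle if no metric
space on a superset `W` of `V` has `L_M(ab) = L_M(cd) ↔ {a,b} r {c,d}`
for all two-point subsets `{a,b}`, `{c,d}` of `V`. -/
def IsObstacle {V : Type u} (r : Set V → Set V → Prop) : Prop :=
  ¬ ∃ (W : Type u) (f : V ↪ W) (d : W → W → ℝ), IsMetric d ∧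
      ∀ a b c e : V, a ≠ b → c ≠ e →
        (lineOf d (f a) (f b) = lineOf d (f c) (f e) ↔ r {a, b} {c, e})

/-- The restriction of a relation on two-point subsets of `V` to the
two-point subsets of `U ⊆ V`. -/
def restrictRel {V : Type*} (r : Set V → Set V → Prop) (U : Set V) :
    Set U → Set U → Prop :=
  fun e f => r (Subtype.val '' e) (Subtype.val '' f)

/-!
Every edge `{u, v}`, `u < v`, of `G` comes from a betweenness among `x = none`, `u`, `v`, and
betweenness propagates along the line `0 < 1 < ⋯ < n - 1`: if `x` lies between `u` and `v`, any
vertex outside `[u, v]` is collinear with `x` and with each of `u`, `v`; if `u` lies between `x`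
and `v`, any vertex strictly between `u` and `v` is. Either way `G` would contain a triangle, so
`{u, v}` is `{0, n - 1}` in the first case and `{u, u + 1}` in the second.
-/

/-- The non-strict version of `MBtw`: no distinctness requirement. -/
def DistBtw {α : Type*} (d : α → α → ℝ) (a b c : α) : Prop :=
  d a b + d b c = d a c

section Betweenness

variable {α : Type*} {d : α → α → ℝ} {a b c y : α}

namespace DistBtw

lemma symm (hd : IsMetric d) (h : DistBtw d a b c) : DistBtw d c b a := by
  unfold DistBtw at *
  rw [hd.symm c b, hd.symm b a, hd.symm c a]
  linarith

lemma trans_right_and_right_left (hd : IsMetric d) (h₁ : DistBtw d a b c)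
    (h₂ : DistBtw d b y c) : DistBtw d a y c ∧ DistBtw d a b y := by
  -- `d a c = d a b + d b y + d y c` squeezes both triangle inequalities to equalities
  have := hd.triangle a b y
  have := hd.triangle a y c
  unfold DistBtw at *
  constructor <;> linarith

lemma trans_right (hd : IsMetric d) (h₁ : DistBtw d a b c) (h₂ : DistBtw d b y c) :
    DistBtw d a y c :=
  (h₁.trans_right_and_right_left hd h₂).1

lemma trans_right_left (hd : IsMetric d) (h₁ : DistBtw d a b c) (h₂ : DistBtw d b y c) :
    DistBtw d a b y :=
  (h₁.trans_right_and_right_left hd h₂).2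

end DistBtw

lemma MBtw.distBtw (h : MBtw d a b c) : DistBtw d a b c :=
  h.2.2.2

lemma MBtw.symm (hd : IsMetric d) (h : MBtw d a b c) : MBtw d c b a :=
  ⟨h.2.2.1.symm, h.2.1.symm, h.1.symm, h.distBtw.symm hd⟩

lemma distBtw_of_mem_metricEdges (hd : IsMetric d) (h : ({a, b, c} : Set α) ∈ metricEdges d) :
    DistBtw d b a c ∨ DistBtw d a b c ∨ DistBtw d a c b := by
  obtain ⟨p, q, r, hs, hpq, hpr, hqr, hbtw⟩ := h
  have hp : p ∈ ({a, b, c} : Set α) := by rw [hs]; simp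
  have hq : q ∈ ({a, b, c} : Set α) := by rw [hs]; simp
  have hr : r ∈ ({a, b, c} : Set α) := by rw [hs]; simp
  simp only [Set.mem_insert_iff, Set.mem_singleton_iff] at hp hq hr
  have hrev : DistBtw d r q p := DistBtw.symm hd hbtw
  rcases hp with rfl | rfl | rfl <;> rcases hq with rfl | rfl | rfl <;>
    rcases hr with rfl | rfl | rfl <;> unfold DistBtw at * <;> tauto

end Betweenness

section LinearlyPlaced

variable {n : ℕ} {G : SimpleGraph (Fin n)} {d : Option (Fin n) → Option (Fin n) → ℝ}

lemma adj_of_distBtw_none_mid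
    (hE : ∀ u v : Fin n, G.Adj u v ↔
      ({none, some u, some v} : Set (Option (Fin n))) ∈ metricEdges d)
    {u v : Fin n} (huv : u ≠ v) (h : DistBtw d (some u) none (some v)) : G.Adj u v :=
  (hE u v).2 ⟨some u, none, some v, Set.insert_comm _ _ _, by simp, by simpa, by simp, h⟩

lemma adj_of_distBtw_none_left
    (hE : ∀ u v : Fin n, G.Adj u v ↔
      ({none, some u, some v} : Set (Option (Fin n))) ∈ metricEdges d)
    {u v : Fin n} (huv : u ≠ v) (h : DistBtw d none (some u) (some v)) : G.Adj u v :=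
  (hE u v).2 ⟨none, some u, some v, rfl, by simp, by simp, by simpa, h⟩

lemma not_mbtw_of_distBtw_none_mid (hG : G.CliqueFree 3) (hd : IsMetric d)
    (hE : ∀ u v : Fin n, G.Adj u v ↔
      ({none, some u, some v} : Set (Option (Fin n))) ∈ metricEdges d)
    {a b c : Fin n} (hab : G.Adj a b) (hxab : DistBtw d (some a) none (some b)) :
    ¬ MBtw d (some c) (some a) (some b) := by
  intro hcab
  have hac : a ≠ c := by rintro rfl; exact hcab.1 rfl
  have hcb : c ≠ b := by rintro rfl; exact hcab.2.1 rfl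
  have hadj_ac : G.Adj a c :=
    adj_of_distBtw_none_left hE hac ((hcab.distBtw.trans_right_left hd hxab).symm hd)
  have hadj_cb : G.Adj c b := adj_of_distBtw_none_mid hE hcb (hcab.distBtw.trans_right hd hxab)
  exact hG {c, a, b} (SimpleGraph.is3Clique_triple_iff.2 ⟨hadj_ac.symm, hadj_cb, hab⟩)

lemma not_mbtw_of_distBtw_none_left (hG : G.CliqueFree 3) (hd : IsMetric d)
    (hE : ∀ u v : Fin n, G.Adj u v ↔
      ({none, some u, some v} : Set (Option (Fin n))) ∈ metricEdges d)
    {a b c : Fin n} (hab : G.Adj a b) (hxab : DistBtw d none (some a) (some b)) :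
    ¬ MBtw d (some a) (some c) (some b) := by
  intro hacb
  have hac : a ≠ c := by rintro rfl; exact hacb.1 rfl
  have hcb : c ≠ b := by rintro rfl; exact hacb.2.2.1 rfl
  have hadj_ac : G.Adj a c :=
    adj_of_distBtw_none_left hE hac (hxab.trans_right_left hd hacb.distBtw)
  have hadj_cb : G.Adj c b := adj_of_distBtw_none_left hE hcb (hxab.trans_right hd hacb.distBtw)
  exact hG {a, c, b} (SimpleGraph.is3Clique_triple_iff.2 ⟨hadj_ac, hab, hadj_cb⟩)

lemma val_succ_eq_or_of_adj (hG : G.CliqueFree 3) (hd : IsMetric d)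
    (hlin : ∀ u v w : Fin n, u < v → v < w → MBtw d (some u) (some v) (some w))
    (hE : ∀ u v : Fin n, G.Adj u v ↔
      ({none, some u, some v} : Set (Option (Fin n))) ∈ metricEdges d)
    {u v : Fin n} (huv : u < v) (hadj : G.Adj u v) :
    u.val + 1 = v.val ∨ (u.val = 0 ∧ v.val + 1 = n) := by
  have hv := v.isLt
  have huv' := Fin.lt_def.1 huv
  rcases distBtw_of_mem_metricEdges hd ((hE u v).1 hadj) with hx | hx | hx
  · refine .inr ⟨?_, ?_⟩ <;> by_contra hne
    · exact not_mbtw_of_distBtw_none_mid hG hd hE hadj hx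
        (hlin ⟨u - 1, by omega⟩ u v (Fin.lt_def.2 (by dsimp only; omega)) huv)
    · exact not_mbtw_of_distBtw_none_mid hG hd hE hadj.symm (hx.symm hd)
        ((hlin u v ⟨v + 1, by omega⟩ huv (Fin.lt_def.2 (by dsimp only; omega))).symm hd)
  all_goals
    refine .inl (by_contra fun hne => ?_)
    have huw : u < ⟨u + 1, by omega⟩ := Fin.lt_def.2 (by dsimp only; omega)
    have hwv : ⟨u + 1, by omega⟩ < v := Fin.lt_def.2 (by dsimp only; omega)
  · exact not_mbtw_of_distBtw_none_left hG hd hE hadj hx (hlin _ _ _ huw hwv)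
  · exact not_mbtw_of_distBtw_none_left hG hd hE hadj.symm hx ((hlin _ _ _ huw hwv).symm hd)

end LinearlyPlaced

/-- If `G` is triangle-free on `V = {0,…,n-1}`, the points of `V` are linearly
placed in a metric space on `V ∪ {x}`, and the edges of `G` are exactly the
pairs `{u,v}` with `{x,u,v} ∈ E_M`, then every edge of `G` is one of
`{0,1}, {1,2}, …, {n-2,n-1}, {n-1,0}`. -/
theorem stmt_7 (n : ℕ) (G : SimpleGraph (Fin n)) (hG : G.CliqueFree 3)
    (d : Option (Fin n) → Option (Fin n) → ℝ) (hd : IsMetric d)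
    (hlin : ∀ u v w : Fin n, u < v → v < w → MBtw d (some u) (some v) (some w))
    (hE : ∀ u v : Fin n, G.Adj u v ↔
        ({none, some u, some v} : Set (Option (Fin n))) ∈ metricEdges d) :
    ∀ u v : Fin n, G.Adj u v →
      (v.val = (u.val + 1) % n ∨ u.val = (v.val + 1) % n) := by
  intro u v hadj
  wlog huv : u < v generalizing u v
  · exact (this v u hadj.symm (lt_of_le_of_ne (not_lt.1 huv) hadj.ne.symm)).symm
  rcases val_succ_eq_or_of_adj hG hd hlin hE huv hadj with hsucc | ⟨hu, hv⟩
  · exact .inl (by rw [Nat.mod_eq_of_lt (hsucc ▸ v.isLt), hsucc])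
  · exact .inr (by rw [hv, Nat.mod_self, hu])
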